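/- Let T be a trivial rack (x·y = x for all x, y), x₀ ∈ T a fixed element, and R an associative ring with unity. Every u ∈ R°[T] with ε(u) = 1 can be written uniquely as u = e + a + α(x₀ − e) with a ∈ Δ_R(T) and α ∈ R, and u is a unit of R°[T] (has a two-sided multiplicative inverse) if and only if α − 1 ∈ R*. That is, the group of normalized units is U₁(R°[T]) = {e + a + α(x₀ − e) | a ∈ Δ_R(T), α − 1 ∈ R*}. -/

import Mathlib

/-!
Statement 11: Let `T` be a trivial rack, `x₀ ∈ T`, and `R` an associative ring with
unity. Every `u ∈ R°[T]` with `ε(u) = 1` can be written uniquely as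
`u = e + a + α(x₀ − e)` with `a ∈ Δ_R(T)` and `α ∈ R`, and `u` is a unit of `R°[T]` iff
`α − 1 ∈ R*`. (This describes the group of normalized units `U₁(R°[T])`.)

`R°[T]` is modelled as `R × (T →₀ R)` with unity `e = (1, 0)`; the element
`e + a + α(x₀ − e)` is the pair `(1 − α, a + α • single x₀ 1)`.
-/

variable {T R : Type*}

/-- Multiplication on the free module `T →₀ R` induced by a binary operation on `T`. -/
noncomputable def qmul [Ring R] (op : T → T → T) (u v : T →₀ R) : T →₀ R :=
  u.sum fun x a => v.sum fun y b => Finsupp.single (op x y) (a * b)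

/-- Right scalar action of `R` on `T →₀ R` (multiplying each coefficient on the right). -/
noncomputable def rsmul [Ring R] (s : R) (a : T →₀ R) : T →₀ R :=
  a.sum fun x c => Finsupp.single x (c * s)

/-- Multiplication of the extended rack ring `R°[T] = R × R[T]`:
`(r, a)(s, b) = (rs, r•b + a•s + ab)`. -/
noncomputable def emul [Ring R] (op : T → T → T) (u v : R × (T →₀ R)) : R × (T →₀ R) :=
  (u.1 * v.1, u.1 • v.2 + rsmul v.1 u.2 + qmul op u.2 v.2)

/-- The augmentation homomorphism `R[T] → R`, `Σ αᵢ xᵢ ↦ Σ αᵢ`. -/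
noncomputable def augHom [Ring R] : (T →₀ R) →+ R :=
  Finsupp.liftAddHom fun _ => AddMonoidHom.id R

/-- The extended augmentation `R°[T] → R`, `(r, a) ↦ r + ε(a)`. -/
noncomputable def eaugHom [Ring R] : (R × (T →₀ R)) →+ R :=
  (AddMonoidHom.id R).coprod augHom

lemma augHom_single [Ring R] (x : T) (c : R) : augHom (Finsupp.single x c) = c := by
  simp [augHom]

lemma augHom_eq_sum [Ring R] (f : T →₀ R) : augHom f = f.sum fun _ c => c := by
  simp [augHom, Finsupp.liftAddHom_apply]
  rfl

lemma augHom_smul [Ring R] (s : R) (f : T →₀ R) : augHom (s • f) = s * augHom f := by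
  induction f using Finsupp.induction_linear with
  | zero => simp
  | add f g hf hg => simp [smul_add, map_add, hf, hg, mul_add]
  | single x c => rw [Finsupp.smul_single', augHom_single, augHom_single]

lemma rsmul_one [Ring R] (f : T →₀ R) : rsmul 1 f = f := by
  simp [rsmul]

lemma eaugHom_apply [Ring R] (u : R × (T →₀ R)) : eaugHom u = u.1 + augHom u.2 := by
  simp [eaugHom]

lemma qmul_triv [Ring R] (op : T → T → T) (htriv : ∀ x y, op x y = x) (u v : T →₀ R) :
    qmul op u v = rsmul (augHom v) u := by
  unfold qmul rsmul
  refine Finsupp.sum_congr fun x _ => ?_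
  simp only [htriv]
  rw [augHom_eq_sum, Finsupp.mul_sum, Finsupp.single_sum]

lemma rsmul_add [Ring R] (s t : R) (f : T →₀ R) :
    rsmul (s + t) f = rsmul s f + rsmul t f := by
  unfold rsmul
  rw [← Finsupp.sum_add]
  exact Finsupp.sum_congr fun x _ => by rw [mul_add, Finsupp.single_add]

lemma emul_triv [Ring R] (op : T → T → T) (htriv : ∀ x y, op x y = x)
    (u v : R × (T →₀ R)) :
    emul op u v = (u.1 * v.1, u.1 • v.2 + rsmul (v.1 + augHom v.2) u.2) := by
  rw [emul, qmul_triv op htriv, rsmul_add, add_assoc]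

theorem stmt_11 [Ring R] (op : T → T → T) (htriv : ∀ x y, op x y = x) (x₀ : T) :
    ∀ u : R × (T →₀ R), eaugHom u = 1 →
      (∃! p : (T →₀ R) × R, augHom p.1 = 0 ∧
        u = (1 - p.2, p.1 + p.2 • Finsupp.single x₀ (1 : R))) ∧
      (∀ (a : T →₀ R) (α : R), augHom a = 0 →
        u = (1 - α, a + α • Finsupp.single x₀ (1 : R)) →
        ((∃ v : R × (T →₀ R),
            emul op u v = ((1 : R), 0) ∧ emul op v u = ((1 : R), 0)) ↔
          IsUnit (α - 1))) := by
  intro u hu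
  rw [eaugHom_apply] at hu
  have haug2 : augHom u.2 = 1 - u.1 := eq_sub_of_add_eq' hu
  constructor
  · refine ⟨(u.2 - (1 - u.1) • Finsupp.single x₀ 1, 1 - u.1), ⟨?_, ?_⟩, ?_⟩
    · rw [map_sub, augHom_smul, augHom_single, haug2, mul_one, sub_self]
    · refine Prod.ext ?_ ?_ <;> simp
    · rintro ⟨q1, q2⟩ ⟨hq0, hqu⟩
      have h1 : u.1 = 1 - q2 := by rw [hqu]
      have h2 : u.2 = q1 + q2 • Finsupp.single x₀ (1 : R) := by rw [hqu]
      have hq2 : q2 = 1 - u.1 := by rw [h1, sub_sub_cancel]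
      refine Prod.ext ?_ hq2
      show q1 = u.2 - (1 - u.1) • Finsupp.single x₀ (1 : R)
      rw [h2, ← hq2, add_sub_cancel_right]
  · intro a α ha hEq
    have hu1 : u.1 = 1 - α := by rw [hEq]
    have hu2 : u.2 = a + α • Finsupp.single x₀ 1 := by rw [hEq]
    have hα : augHom u.2 = α := by
      rw [hu2, map_add, ha, augHom_smul, augHom_single, mul_one, zero_add]
    have h1α : (1 : R) - α = -(α - 1) := (neg_sub α 1).symm
    constructor
    · rintro ⟨v, h1, h2⟩
      have e1 : u.1 * v.1 = 1 := congrArg Prod.fst h1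
      have e2 : v.1 * u.1 = 1 := congrArg Prod.fst h2
      have hun : IsUnit u.1 := ⟨⟨u.1, v.1, e1, e2⟩, rfl⟩
      rw [hu1, h1α] at hun
      exact (IsUnit.neg_iff _).mp hun
    · intro h
      obtain ⟨w, hw⟩ := h
      set s : R := -((w⁻¹ : Rˣ) : R) with hs
      have hus : u.1 * s = 1 := by
        rw [hu1, hs, h1α, ← hw, neg_mul_neg]
        exact w.mul_inv
      have hsu : s * u.1 = 1 := by
        rw [hu1, hs, h1α, ← hw, neg_mul_neg]
        exact w.inv_mul
      refine ⟨(s, -(s • u.2)), ?_, ?_⟩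
      · rw [emul_triv op htriv]
        refine Prod.ext hus ?_
        show u.1 • -(s • u.2) + rsmul (s + augHom (-(s • u.2))) u.2 = 0
        rw [map_neg, augHom_smul, hα]
        have hco : s + -(s * α) = 1 := by
          have : s + -(s * α) = s * (1 - α) := by
            rw [mul_sub, mul_one, sub_eq_add_neg]
          rw [this, ← hu1, hsu]
        rw [hco, rsmul_one, smul_neg, smul_smul, hus, one_smul, neg_add_cancel]
      · rw [emul_triv op htriv]
        refine Prod.ext hsu ?_
        show s • u.2 + rsmul (u.1 + augHom u.2) (-(s • u.2)) = 0
        rw [hu, rsmul_one, add_neg_cancel]
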